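/- arXiv:2508.17821 — 2 statements merged into one kernel-verified Lean document; each statement's English description precedes it below -/
import Mathlib

section
/- Let F : ℝ → ℝ be differentiable and strictly positive, let l ∈ ℝ^L, and define α_i(l) = F(l_i)/∑_{j=1}^L F(l_j). Let m = min_j F(l_j), ‖F‖ = max_j |F(l_j)|, ‖F'‖ = max_j |F'(l_j)|. Then every partial derivative satisfies |∂α_i/∂l_k| ≤ ‖F'‖·(1/(L·m) + ‖F‖/(L²·m²)). -/
/-!
Perturbing the single logit `l k` moves the numerator `F (l i)` only when `i = k` and moves the
normalizer `S = ∑ j, F (l j)` by `F' (l k)`, so the quotient rule gives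
`∂α_i/∂l_k = δ_ik F'(l k) / S - F (l i) F'(l k) / S²`. Both terms are then bounded using `S ≥ L m`.
-/

open Function

section Normalization

variable {ι : Type*} [DecidableEq ι] {F : ℝ → ℝ} {l : ι → ℝ} {k : ι}

lemma hasDerivAt_comp_update_apply (hF : DifferentiableAt ℝ F (l k)) (j : ι) :
    HasDerivAt (fun t => F (update l k t j)) (if j = k then deriv F (l k) else 0) (l k) := by
  by_cases hjk : j = k
  · subst hjk
    simpa only [update_self, if_true] using hF.hasDerivAt
  · simpa only [update_of_ne hjk, if_neg hjk] using hasDerivAt_const (l k) (F (l j))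

lemma hasDerivAt_div_sum_comp_update [Fintype ι] (hF : DifferentiableAt ℝ F (l k))
    (hS : ∑ j, F (l j) ≠ 0) (i : ι) :
    HasDerivAt (fun t => F (update l k t i) / ∑ j, F (update l k t j))
      ((if i = k then deriv F (l k) else 0) / ∑ j, F (l j)
        - F (l i) * deriv F (l k) / (∑ j, F (l j)) ^ 2) (l k) := by
  have hsum : HasDerivAt (fun t => ∑ j, F (update l k t j)) (deriv F (l k)) (l k) := by
    simpa using HasDerivAt.fun_sum fun j (_ : j ∈ Finset.univ) => hasDerivAt_comp_update_apply hF j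
  have hquot := (hasDerivAt_comp_update_apply hF i).fun_div hsum (by simpa using hS)
  rw [update_eq_self] at hquot
  refine hquot.congr_deriv ?_
  field_simp

end Normalization

lemma abs_div_sub_mul_div_sq_le {d a b S s A D : ℝ} (hs : 0 < s) (hsS : s ≤ S)
    (hd : |d| ≤ D) (ha : |a| ≤ A) (hb : |b| ≤ D) :
    |d / S - a * b / S ^ 2| ≤ D / s + A * D / s ^ 2 := by
  have hS : 0 < S := hs.trans_le hsS
  have hD : 0 ≤ D := (abs_nonneg _).trans hd
  have hA : 0 ≤ A := (abs_nonneg _).trans ha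
  have h₁ : |d / S| ≤ D / s := by
    rw [abs_div, abs_of_pos hS]
    exact div_le_div₀ hD hd hs hsS
  have h₂ : |a * b / S ^ 2| ≤ A * D / s ^ 2 := by
    rw [abs_div, abs_of_pos (pow_pos hS 2), abs_mul]
    exact div_le_div₀ (by positivity) (mul_le_mul ha hb (abs_nonneg _) hA) (by positivity)
      (pow_le_pow_left₀ hs.le hsS 2)
  exact (abs_sub _ _).trans (add_le_add h₁ h₂)

theorem general_normalization_jacobian_bound_general
    (F : ℝ → ℝ) (hF : Differentiable ℝ F)
    (L : ℕ) (l : Fin L → ℝ)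
    (m : ℝ) (hm0 : 0 < m) (hm : ∀ j, m ≤ F (l j))
    (Fmax : ℝ) (hFmax : ∀ j, |F (l j)| ≤ Fmax)
    (F'max : ℝ) (hF'max : ∀ j, |deriv F (l j)| ≤ F'max)
    (i k : Fin L) :
    |deriv (fun t : ℝ =>
        F (Function.update l k t i) / ∑ j, F (Function.update l k t j)) (l k)|
      ≤ F'max * (1 / (L * m) + Fmax / (L ^ 2 * m ^ 2)) := by
  have hLm : 0 < (L : ℝ) * m := mul_pos (Nat.cast_pos.2 i.pos) hm0
  have hS : (L : ℝ) * m ≤ ∑ j, F (l j) := by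
    simpa using Finset.card_nsmul_le_sum Finset.univ (fun j => F (l j)) m fun j _ => hm j
  have hδ : |if i = k then deriv F (l k) else 0| ≤ F'max := by
    split_ifs
    · exact hF'max k
    · simpa using (abs_nonneg _).trans (hF'max k)
  rw [(hasDerivAt_div_sum_comp_update (hF (l k)) (hLm.trans_le hS).ne' i).deriv]
  calc _ ≤ F'max / (L * m) + Fmax * F'max / (L * m) ^ 2 :=
        abs_div_sub_mul_div_sq_le hLm hS hδ (hFmax i) (hF'max k)
    _ = _ := by ring

theorem general_normalization_jacobian_bound
    (F : ℝ → ℝ) (hF : Differentiable ℝ F) (hFpos : ∀ x, 0 < F x)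
    (L : ℕ) (hL : 0 < L) (l : Fin L → ℝ)
    (m : ℝ) (hm0 : 0 < m) (hm : ∀ j, m ≤ F (l j))
    (Fmax : ℝ) (hFmax : ∀ j, |F (l j)| ≤ Fmax)
    (F'max : ℝ) (hF'max : ∀ j, |deriv F (l j)| ≤ F'max)
    (i k : Fin L) :
    |deriv (fun t : ℝ =>
        F (Function.update l k t i) / ∑ j, F (Function.update l k t j)) (l k)|
      ≤ F'max * (1 / (L * m) + Fmax / (L ^ 2 * m ^ 2)) :=
  general_normalization_jacobian_bound_general F hF L l m hm0 hm Fmax hFmax F'max hF'max i k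
end

section
/- Let x₁,…,x_N lie on the sphere of radius M in ℝ^d with pairwise distances at least δ > 0, and let α_j = 1/N for all j (uniform weights). Fix i and let ξ_i be defined by ξ_i² = M²·(N−1)/N² + (M² − δ²/2)·(N−1)(N−2)/N². Then ‖(1/N)∑_{j≠i} x_j‖₂ ≤ ξ_i, and as N → ∞, ξ_i² → M² − δ²/2. -/
/-! Expand `‖∑ x_j‖²` into inner products: the `N - 1` diagonal terms equal `M²`, and each of the
`(N - 1)(N - 2)` off-diagonal terms is at most `M² - δ²/2`, because
`δ² ≤ ‖x_j - x_k‖² = 2M² - 2⟪x_j, x_k⟫`. -/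

open Filter Finset RealInnerProductSpace

section InnerProduct

variable {E : Type*} [NormedAddCommGroup E] [InnerProductSpace ℝ E]

theorem real_inner_le_of_norm_eq_of_le_norm_sub {u v : E} {M δ : ℝ} (hδ : 0 ≤ δ)
    (hu : ‖u‖ = M) (hv : ‖v‖ = M) (hsep : δ ≤ ‖u - v‖) :
    ⟪u, v⟫ ≤ M ^ 2 - δ ^ 2 / 2 := by
  have hsq : δ ^ 2 ≤ ‖u - v‖ ^ 2 := pow_le_pow_left₀ hδ hsep 2
  rw [norm_sub_sq_real, hu, hv] at hsq
  linarith

theorem norm_sum_sq_le_of_real_inner_le {ι : Type*} [DecidableEq ι] (s : Finset ι) (x : ι → E)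
    {a c : ℝ} (hnorm : ∀ j ∈ s, ‖x j‖ ^ 2 ≤ a)
    (hinner : ∀ j ∈ s, ∀ k ∈ s, j ≠ k → ⟪x j, x k⟫ ≤ c) :
    ‖∑ j ∈ s, x j‖ ^ 2 ≤ #s * a + #s * (#s - 1) * c := by
  have hrow : ∀ j ∈ s, ∑ k ∈ s, ⟪x j, x k⟫ ≤ a + (#s - 1) * c := by
    intro j hj
    have hoff : ∑ k ∈ s.erase j, ⟪x j, x k⟫ ≤ (#s - 1) * c := by
      rw [← cast_card_erase_of_mem hj, ← nsmul_eq_mul]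
      exact sum_le_card_nsmul _ _ _ fun k hk =>
        hinner j hj k (mem_of_mem_erase hk) (ne_of_mem_erase hk).symm
    rw [← add_sum_erase s _ hj, real_inner_self_eq_norm_sq]
    linarith [hnorm j hj]
  calc ‖∑ j ∈ s, x j‖ ^ 2 = ∑ j ∈ s, ∑ k ∈ s, ⟪x j, x k⟫ := by
        simp_rw [← real_inner_self_eq_norm_sq, sum_inner, inner_sum]
    _ ≤ ∑ _j ∈ s, (a + (#s - 1) * c) := sum_le_sum hrow
    _ = #s * a + #s * (#s - 1) * c := by rw [sum_const, nsmul_eq_mul]; ring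

end InnerProduct

theorem tendsto_uniform_spread_sq (a b : ℝ) :
    Tendsto (fun n : ℕ => a * (n - 1) / n ^ 2 + b * ((n - 1) * (n - 2)) / n ^ 2)
      atTop (nhds b) := by
  have h0 : Tendsto (fun n : ℕ => (1 : ℝ) / n) atTop (nhds 0) :=
    tendsto_one_div_atTop_nhds_zero_nat
  have hlim : Tendsto (fun n : ℕ => a * (1 / n) * (1 - 1 / n) + b * ((1 - 1 / n) * (1 - 2 * (1 / n))))
      atTop (nhds (a * 0 * (1 - 0) + b * ((1 - 0) * (1 - 2 * 0)))) :=
    ((tendsto_const_nhds.mul h0).mul (tendsto_const_nhds.sub h0)).add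
      (tendsto_const_nhds.mul
        ((tendsto_const_nhds.sub h0).mul (tendsto_const_nhds.sub (tendsto_const_nhds.mul h0))))
  rw [show a * 0 * (1 - 0) + b * ((1 - 0) * (1 - 2 * 0)) = b by ring] at hlim
  refine hlim.congr' ?_
  filter_upwards [eventually_ge_atTop 1] with n hn
  have hn' : (n : ℝ) ≠ 0 := by positivity
  field_simp

theorem uniform_weights_spread_bound
    (d N : ℕ) (x : Fin N → EuclideanSpace ℝ (Fin d))
    (M δ : ℝ) (hδ : 0 < δ)
    (hM : ∀ j, ‖x j‖ = M)
    (hsep : ∀ j k, j ≠ k → δ ≤ ‖x j - x k‖)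
    (i : Fin N) (ξ : ℝ) (hξ0 : 0 ≤ ξ)
    (hξ : ξ ^ 2 = M ^ 2 * (N - 1) / N ^ 2 +
      (M ^ 2 - δ ^ 2 / 2) * ((N - 1) * (N - 2)) / N ^ 2) :
    ‖(1 / (N : ℝ)) • ∑ j ∈ Finset.univ.erase i, x j‖ ≤ ξ ∧
    Tendsto (fun n : ℕ => M ^ 2 * (n - 1) / n ^ 2 +
        (M ^ 2 - δ ^ 2 / 2) * ((n - 1) * (n - 2)) / n ^ 2)
      atTop (nhds (M ^ 2 - δ ^ 2 / 2)) := by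
  refine ⟨?_, tendsto_uniform_spread_sq _ _⟩
  have hcard : (#(univ.erase i) : ℝ) = N - 1 := by
    rw [cast_card_erase_of_mem (mem_univ i), card_univ, Fintype.card_fin]
  have hsum := norm_sum_sq_le_of_real_inner_le (univ.erase i) x (a := M ^ 2)
    (fun j _ => by rw [hM j])
    (fun j _ k _ hjk => real_inner_le_of_norm_eq_of_le_norm_sub hδ.le (hM j) (hM k) (hsep j k hjk))
  rw [hcard] at hsum
  have hN : (0 : ℝ) < N := by exact_mod_cast i.pos
  rw [← pow_le_pow_iff_left₀ (norm_nonneg _) hξ0 two_ne_zero, norm_smul, mul_pow,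
    Real.norm_of_nonneg (by positivity), hξ]
  calc (1 / (N : ℝ)) ^ 2 * ‖∑ j ∈ univ.erase i, x j‖ ^ 2
      ≤ (1 / (N : ℝ)) ^ 2 * ((N - 1) * M ^ 2 + (N - 1) * (N - 1 - 1) * (M ^ 2 - δ ^ 2 / 2)) :=
        mul_le_mul_of_nonneg_left hsum (by positivity)
    _ = _ := by field_simp; ring
end
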